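/- Consider an arbitrary-length evolution where at each round a single winner's stake increases by a fixed β > 0 and the winner is always drawn from a fixed proper subset A of players. Then the Nakamoto coefficient with threshold τ ∈ (0,1) eventually becomes at most |A|: there exists T such that for all t ≥ T, d(σ^t) ≤ |A|. -/

import Mathlib

/-! Both the stake of `A` and the total stake grow by exactly `β` per round, so after `t` rounds
they are `b + tβ` and `a + tβ`; since `τ < 1`, eventually `τ (a + tβ) < b + tβ`, and then `A`
itself is a coalition witnessing `d(σ^t) ≤ |A|`. -/

open Finset

/-- Nakamoto coefficient of the stake profile `σ` restricted to the player set `N`,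
with threshold `τ`: the minimum size of a coalition `C ⊆ N` whose total stake strictly
exceeds `τ` times the total stake of `N`. -/
noncomputable def nakamoto {n : ℕ} (σ : Fin n → ℝ) (N : Finset (Fin n)) (τ : ℝ) : ℕ :=
  sInf {k : ℕ | ∃ C ⊆ N, C.card = k ∧ τ * ∑ j ∈ N, σ j < ∑ j ∈ C, σ j}

open Filter

theorem nakamoto_le_card {n : ℕ} {σ : Fin n → ℝ} {N C : Finset (Fin n)} {τ : ℝ} (hCN : C ⊆ N)
    (hC : τ * ∑ j ∈ N, σ j < ∑ j ∈ C, σ j) : nakamoto σ N τ ≤ C.card :=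
  Nat.sInf_le ⟨C, hCN, rfl, hC⟩

theorem sum_stake_eq_add_mul {n : ℕ} {β : ℝ} {σ : ℕ → Fin n → ℝ} {w : ℕ → Fin n}
    (hupd : ∀ t i, σ (t + 1) i = σ t i + if i = w t then β else 0)
    {S : Finset (Fin n)} (hw : ∀ t, w t ∈ S) (t : ℕ) :
    ∑ j ∈ S, σ t j = ∑ j ∈ S, σ 0 j + t * β := by
  induction t with
  | zero => simp
  | succ t ih =>
    simp only [hupd, sum_add_distrib, ih, sum_ite_eq', if_pos (hw t)]
    push_cast
    ring

theorem eventually_mul_add_lt_add {τ β : ℝ} (hτ1 : τ < 1) (hβ : 0 < β) (a b : ℝ) :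
    ∀ᶠ t : ℕ in atTop, τ * (a + t * β) < b + t * β := by
  have hgap : Tendsto (fun t : ℕ => (b - τ * a) + (β * (1 - τ)) * t) atTop atTop :=
    tendsto_atTop_add_const_left _ _
      (tendsto_natCast_atTop_atTop.const_mul_atTop (mul_pos hβ (sub_pos.mpr hτ1)))
  filter_upwards [hgap.eventually_gt_atTop 0] with t ht
  linarith

theorem stmt15_general {n : ℕ} (τ : ℝ) (hτ1 : τ < 1)
    (A : Finset (Fin n))
    (β : ℝ) (hβ : 0 < β)
    (σ : ℕ → Fin n → ℝ)
    (w : ℕ → Fin n) (hw : ∀ t, w t ∈ A)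
    (hupd : ∀ t i, σ (t + 1) i = σ t i + if i = w t then β else 0) :
    ∃ T : ℕ, ∀ t, T ≤ t → nakamoto (σ t) Finset.univ τ ≤ A.card := by
  obtain ⟨T, hT⟩ := eventually_atTop.mp
    (eventually_mul_add_lt_add hτ1 hβ (∑ j, σ 0 j) (∑ j ∈ A, σ 0 j))
  refine ⟨T, fun t ht => nakamoto_le_card (subset_univ A) ?_⟩
  rw [sum_stake_eq_add_mul hupd hw, sum_stake_eq_add_mul hupd (fun t => mem_univ (w t))]
  exact hT t ht

theorem stmt15 {n : ℕ} (τ : ℝ) (hτ0 : 0 < τ) (hτ1 : τ < 1)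
    (A : Finset (Fin n)) (hA : A.Nonempty) (hAne : A ≠ Finset.univ)
    (β : ℝ) (hβ : 0 < β)
    (σ : ℕ → Fin n → ℝ) (hσ0 : ∀ i, 0 ≤ σ 0 i) (hpos : 0 < ∑ i, σ 0 i)
    (w : ℕ → Fin n) (hw : ∀ t, w t ∈ A)
    (hupd : ∀ t i, σ (t + 1) i = σ t i + if i = w t then β else 0) :
    ∃ T : ℕ, ∀ t, T ≤ t → nakamoto (σ t) Finset.univ τ ≤ A.card :=
  stmt15_general τ hτ1 A β hβ σ w hw hupd
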